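/- arXiv:2103.17041 — 5 statements merged into one kernel-verified Lean document; each statement's English description precedes it below -/
import Mathlib

section
/- Let H be a graph and let Z be a set of vertices of H such that every z ∈ Z has exactly two neighbors in H and these two neighbors are adjacent to each other in H. Let R' be a Steiner tree for Z in H. If R' has a detour, then there exist vertices u, v and a path P that witness a detour of R' compactly. -/
open SimpleGraph

/-- The degree of a vertex in a subgraph: the number of its neighbours in the subgraph. -/
noncomputable def degN {V : Type*} {H : SimpleGraph V} (R : H.Subgraph) (v : V) : ℕ :=
  (R.neighborSet v).ncard

/-- `R` is a Steiner tree for `Z` in `H`: a subtree of `H` whose set of leaves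
(vertices of degree exactly `1`) is exactly `Z`. -/
def IsSteinerTree {V : Type*} (H : SimpleGraph V) (Z : Set V) (R : H.Subgraph) : Prop :=
  R.coe.IsTree ∧ {v : V | degN R v = 1} = Z

/-- `u`, `v` and the path `P` witness a detour of the subtree `R` of `H`.  Here `Q` is the
unique path of `R` between `u` and `v` (expressed as a path of `H` all of whose vertices and
edges lie in `R`); `u` and `v` are vertices of degree `1` or `≥ 3` of `R` that are near each
other (no internal vertex of `Q` has degree `≥ 3` in `R`); `P` is a path of `H` that is
strictly shorter than `Q`, with one endpoint in the connected component of
`R − (V(Q) \ {u,v})` containing `u` and the other endpoint in the component containing `v`. -/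
def DetourWitness {V : Type*} (H : SimpleGraph V) (R : H.Subgraph)
    {u v a b : V} (Q : H.Walk u v) (P : H.Walk a b) : Prop :=
  u ≠ v ∧
  (degN R u = 1 ∨ 3 ≤ degN R u) ∧
  (degN R v = 1 ∨ 3 ≤ degN R v) ∧
  Q.IsPath ∧ Q.toSubgraph ≤ R ∧
  (∀ w ∈ Q.support, w ≠ u → w ≠ v → degN R w < 3) ∧
  P.IsPath ∧
  P.length < Q.length ∧
  (∃ (ha : a ∈ (R.deleteVerts {w : V | w ∈ Q.support ∧ w ≠ u ∧ w ≠ v}).verts)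
      (hu : u ∈ (R.deleteVerts {w : V | w ∈ Q.support ∧ w ≠ u ∧ w ≠ v}).verts),
      (R.deleteVerts {w : V | w ∈ Q.support ∧ w ≠ u ∧ w ≠ v}).coe.Reachable ⟨a, ha⟩ ⟨u, hu⟩) ∧
  (∃ (hb : b ∈ (R.deleteVerts {w : V | w ∈ Q.support ∧ w ≠ u ∧ w ≠ v}).verts)
      (hv : v ∈ (R.deleteVerts {w : V | w ∈ Q.support ∧ w ≠ u ∧ w ≠ v}).verts),
      (R.deleteVerts {w : V | w ∈ Q.support ∧ w ≠ u ∧ w ≠ v}).coe.Reachable ⟨b, hb⟩ ⟨v, hv⟩)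

/-- `u`, `v` and `P` witness a detour of `R` compactly: in addition, `P` has no internal
vertex from `(V(R) \ V(Q)) ∪ {u, v}` and its endpoints are not leaves of `R` other than
possibly `u` or `v`. -/
def CompactDetourWitness {V : Type*} (H : SimpleGraph V) (R : H.Subgraph)
    {u v a b : V} (Q : H.Walk u v) (P : H.Walk a b) : Prop :=
  DetourWitness H R Q P ∧
  (∀ w ∈ P.support, w ≠ a → w ≠ b →
    w ∉ ((R.verts \ {x : V | x ∈ Q.support}) ∪ {u, v})) ∧
  a ∉ ({x : V | degN R x = 1} \ {u, v}) ∧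
  b ∉ ({x : V | degN R x = 1} \ {u, v})

/-- The subtree `R` of `H` has a detour. -/
def HasDetour {V : Type*} (H : SimpleGraph V) (R : H.Subgraph) : Prop :=
  ∃ (u v a b : V) (Q : H.Walk u v) (P : H.Walk a b), DetourWitness H R Q P


section Aux

variable {V : Type*} {H : SimpleGraph V}

lemma aux_mem_verts_of_degN {R : H.Subgraph} {u : V}
    (h : degN R u = 1 ∨ 3 ≤ degN R u) : u ∈ R.verts := by
  have hne : (R.neighborSet u).Nonempty := by
    rw [Set.nonempty_iff_ne_empty]
    intro he
    simp [degN, he] at h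
  obtain ⟨c, hc⟩ := hne
  exact R.edge_vert hc

def auxToCoe {R : H.Subgraph} :
    ∀ {x y : V} (p : H.Walk x y), p.toSubgraph ≤ R → (hx : x ∈ R.verts) →
      (hy : y ∈ R.verts) → R.coe.Walk ⟨x, hx⟩ ⟨y, hy⟩
  | _, _, Walk.nil, _, _, _ => Walk.nil
  | x, y, @Walk.cons _ _ _ z _ h q, hle, hx, hy =>
      have h1 : R.Adj x z := hle.2 (by simp)
      Walk.cons (show R.coe.Adj ⟨x, hx⟩ ⟨z, R.edge_vert h1.symm⟩ from h1)
        (auxToCoe q (le_trans le_sup_right hle) (R.edge_vert h1.symm) hy)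

lemma auxToCoe_support {R : H.Subgraph} :
    ∀ {x y : V} (p : H.Walk x y) (hp : p.toSubgraph ≤ R) (hx : x ∈ R.verts)
      (hy : y ∈ R.verts), (auxToCoe p hp hx hy).support.map Subtype.val = p.support
  | _, _, Walk.nil, _, _, _ => rfl
  | x, y, @Walk.cons _ _ _ z _ h q, hle, hx, hy => by
      simp [auxToCoe, auxToCoe_support q (le_trans le_sup_right hle)]

lemma auxToCoe_isPath {R : H.Subgraph} {x y : V} (p : H.Walk x y) (hp : p.toSubgraph ≤ R)
    (hx : x ∈ R.verts) (hy : y ∈ R.verts) (h : p.IsPath) : (auxToCoe p hp hx hy).IsPath := by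
  rw [Walk.isPath_def] at h ⊢
  have hs := auxToCoe_support p hp hx hy
  rw [← hs] at h
  exact h.of_map

lemma aux_two_nbrs :
    ∀ {u v x : V} (Q : H.Walk u v), Q.IsPath → x ∈ Q.support → x ≠ u → x ≠ v →
      ∃ s t, s ≠ t ∧ Q.toSubgraph.Adj x s ∧ Q.toSubgraph.Adj x t := by
  intro u v x Q
  induction Q with
  | nil => intro _ hx hxu _; simp at hx; exact absurd hx hxu
  | @cons u u' v h Q' ih =>
    intro hp hx hxu hxv
    rw [Walk.support_cons, List.mem_cons] at hx
    rcases hx with rfl | hx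
    · exact absurd rfl hxu
    rw [Walk.cons_isPath_iff] at hp
    by_cases hxu' : x = u'
    · subst hxu'
      cases Q' with
      | nil => exact absurd rfl hxv
      | @cons _ u'' _ h2 Q'' =>
        refine ⟨u, u'', ?_, ?_, ?_⟩
        · intro he; subst he
          exact hp.2 (by simp)
        · simp [Walk.toSubgraph, Subgraph.sup_adj, Sym2.eq_swap]
        · simp [Walk.toSubgraph, Subgraph.sup_adj]
    · obtain ⟨s, t, hst, hs, ht⟩ := ih hp.1 hx hxu' hxv
      exact ⟨s, t, hst, by simp [Walk.toSubgraph, Subgraph.sup_adj, hs],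
        by simp [Walk.toSubgraph, Subgraph.sup_adj, ht]⟩

lemma aux_dichotomy [Fintype V] {R : H.Subgraph} {u v : V} (Q : H.Walk u v)
    (hQp : Q.IsPath) (hQle : Q.toSubgraph ≤ R)
    (hQint : ∀ w ∈ Q.support, w ≠ u → w ≠ v → degN R w < 3)
    (hconn : R.coe.Connected)
    (hu : u ∈ (R.deleteVerts {w | w ∈ Q.support ∧ w ≠ u ∧ w ≠ v}).verts)
    (hv : v ∈ (R.deleteVerts {w | w ∈ Q.support ∧ w ≠ u ∧ w ≠ v}).verts)
    {w : V} (hw : w ∈ (R.deleteVerts {w | w ∈ Q.support ∧ w ≠ u ∧ w ≠ v}).verts) :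
    (R.deleteVerts {w | w ∈ Q.support ∧ w ≠ u ∧ w ≠ v}).coe.Reachable ⟨w, hw⟩ ⟨u, hu⟩ ∨
    (R.deleteVerts {w | w ∈ Q.support ∧ w ≠ u ∧ w ≠ v}).coe.Reachable ⟨w, hw⟩ ⟨v, hv⟩ := by
  set D : Set V := {w | w ∈ Q.support ∧ w ≠ u ∧ w ≠ v} with hD
  have key : ∀ (x y : R.verts) (W : R.coe.Walk x y), (↑y = u ∨ ↑y = v) →
      ∀ hx' : ↑x ∈ (R.deleteVerts D).verts,
      (R.deleteVerts D).coe.Reachable ⟨↑x, hx'⟩ ⟨u, hu⟩ ∨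
      (R.deleteVerts D).coe.Reachable ⟨↑x, hx'⟩ ⟨v, hv⟩ := by
    intro x y W
    induction W with
    | nil =>
      rintro (h | h) hx'
      · exact Or.inl
          (by rw [show (⟨_, hx'⟩ : (R.deleteVerts D).verts) = ⟨u, hu⟩ from Subtype.ext h])
      · exact Or.inr
          (by rw [show (⟨_, hx'⟩ : (R.deleteVerts D).verts) = ⟨v, hv⟩ from Subtype.ext h])
    | @cons x z y hadj W ih =>
      intro hy hx'
      by_cases hxu : ↑x = u
      · exact Or.inl
          (by rw [show (⟨_, hx'⟩ : (R.deleteVerts D).verts) = ⟨u, hu⟩ from Subtype.ext hxu])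
      by_cases hxv : ↑x = v
      · exact Or.inr
          (by rw [show (⟨_, hx'⟩ : (R.deleteVerts D).verts) = ⟨v, hv⟩ from Subtype.ext hxv])
      have hxD : ↑x ∉ D := by
        have := hx'; rw [Subgraph.deleteVerts_verts] at this; exact this.2
      have hxQ : ↑x ∉ Q.support := by
        intro hmem; exact hxD ⟨hmem, hxu, hxv⟩
      have hRxz : R.Adj ↑x ↑z := hadj
      by_cases hz : ↑z ∈ D
      · exfalso
        obtain ⟨hzQ, hzu, hzv⟩ := hz
        obtain ⟨s, t, hst, hs, ht⟩ := aux_two_nbrs Q hQp hzQ hzu hzv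
        have hsQ : s ∈ Q.support := by
          have := Q.toSubgraph.edge_vert hs.symm
          rwa [Walk.verts_toSubgraph] at this
        have htQ : t ∈ Q.support := by
          have := Q.toSubgraph.edge_vert ht.symm
          rwa [Walk.verts_toSubgraph] at this
        have hsub : {↑x, s, t} ⊆ R.neighborSet ↑z := by
          rintro e (rfl | rfl | rfl)
          · exact hRxz.symm
          · exact hQle.2 hs
          · exact hQle.2 ht
        have h3 : ({↑x, s, t} : Set V).ncard = 3 := by
          rw [Set.ncard_eq_three]
          exact ⟨↑x, s, t, fun h => hxQ (h ▸ hsQ), fun h => hxQ (h ▸ htQ), hst, rfl⟩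
        have hle3 : 3 ≤ degN R ↑z := by
          rw [← h3]
          exact Set.ncard_le_ncard hsub (Set.toFinite _)
        exact absurd (hQint _ hzQ hzu hzv) (not_lt.mpr hle3)
      · have hz' : ↑z ∈ (R.deleteVerts D).verts := by
          rw [Subgraph.deleteVerts_verts]; exact ⟨z.2, hz⟩
        have hadj' : (R.deleteVerts D).coe.Adj ⟨↑x, hx'⟩ ⟨↑z, hz'⟩ := by
          simp only [Subgraph.coe_adj, Subgraph.deleteVerts_adj]
          exact ⟨x.2, hxD, z.2, hz, hRxz⟩
        rcases ih hy hz' with h | h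
        · exact Or.inl (hadj'.reachable.trans h)
        · exact Or.inr (hadj'.reachable.trans h)
  have hw1 : w ∈ R.verts := by rw [Subgraph.deleteVerts_verts] at hw; exact hw.1
  have hu1 : u ∈ R.verts := by rw [Subgraph.deleteVerts_verts] at hu; exact hu.1
  obtain ⟨W⟩ := hconn.preconnected ⟨w, hw1⟩ ⟨u, hu1⟩
  exact key ⟨w, hw1⟩ ⟨u, hu1⟩ W (Or.inl rfl) hw

lemma aux_mid {u v : V} (Q : H.Walk u v) (hQp : Q.IsPath) (h2 : 2 ≤ Q.length) :
    ∃ z, z ∈ Q.support ∧ z ≠ u ∧ z ≠ v := by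
  cases Q with
  | nil => simp at h2
  | @cons _ z _ h Q' =>
    rw [Walk.cons_isPath_iff] at hQp
    cases Q' with
    | nil => simp at h2
    | @cons _ z' _ h' Q'' =>
      refine ⟨z, by simp, ?_, ?_⟩
      · intro he; exact hQp.2 (he ▸ Walk.start_mem_support _)
      · intro he
        rw [Walk.cons_isPath_iff] at hQp
        exact hQp.1.2 (he ▸ Walk.end_mem_support Q'')

lemma aux_noreach {R : H.Subgraph} {u v : V} (Q : H.Walk u v)
    (htree : R.coe.IsTree) (hQp : Q.IsPath) (hQle : Q.toSubgraph ≤ R) (hQ2 : 2 ≤ Q.length)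
    (hu : u ∈ (R.deleteVerts {w | w ∈ Q.support ∧ w ≠ u ∧ w ≠ v}).verts)
    (hv : v ∈ (R.deleteVerts {w | w ∈ Q.support ∧ w ≠ u ∧ w ≠ v}).verts) :
    ¬ (R.deleteVerts {w | w ∈ Q.support ∧ w ≠ u ∧ w ≠ v}).coe.Reachable ⟨u, hu⟩ ⟨v, hv⟩ := by
  set D : Set V := {w | w ∈ Q.support ∧ w ≠ u ∧ w ≠ v} with hD
  have hu1 : u ∈ R.verts := by rw [Subgraph.deleteVerts_verts] at hu; exact hu.1
  have hv1 : v ∈ R.verts := by rw [Subgraph.deleteVerts_verts] at hv; exact hv.1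
  classical
  intro hreach
  obtain ⟨W⟩ := hreach
  have hdel : R.deleteVerts D ≤ R := Subgraph.deleteVerts_le
  let Wm : R.coe.Walk ⟨u, hu1⟩ ⟨v, hv1⟩ :=
    (W.map (Subgraph.inclusion hdel)).copy (Subtype.ext rfl) (Subtype.ext rfl)
  let Wb := Wm.bypass
  have hWb : Wb.IsPath := Walk.bypass_isPath _
  let Qc := auxToCoe Q hQle hu1 hv1
  have hQc : Qc.IsPath := auxToCoe_isPath Q hQle hu1 hv1 hQp
  have hequ := htree.existsUnique_path ⟨u, hu1⟩ ⟨v, hv1⟩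
  have heq : Qc = Wb := hequ.unique hQc hWb
  obtain ⟨z, hzQ, hzu, hzv⟩ := aux_mid Q hQp hQ2
  have : z ∈ (Qc.support.map Subtype.val) := by
    rw [auxToCoe_support]; exact hzQ
  obtain ⟨zc, hzc, hzcv⟩ := List.mem_map.mp this
  rw [heq] at hzc
  have hzc2 : zc ∈ Wm.support := Walk.support_bypass_subset _ hzc
  have : ↑zc ∈ (R.deleteVerts D).verts := by
    rw [Walk.support_copy, Walk.support_map] at hzc2
    obtain ⟨ω, _, rfl⟩ := List.mem_map.mp hzc2
    exact ω.2
  rw [Subgraph.deleteVerts_verts] at this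
  exact this.2 (hzcv ▸ ⟨hzQ, hzu, hzv⟩)

lemma aux_secondvx {α : Type*} {G : SimpleGraph α} {x y : α} (h : G.Reachable x y)
    (hne : x ≠ y) : ∃ z, G.Adj x z ∧ G.Reachable z y := by
  obtain ⟨W⟩ := h
  cases W with
  | nil => exact absurd rfl hne
  | cons hadj W' => exact ⟨_, hadj, ⟨W'⟩⟩

lemma aux_no_two_leaves {R : H.Subgraph} (hconn : R.coe.Connected) {a c u : V}
    (hac : R.Adj a c) (hNa : R.neighborSet a = {c}) (hNc : R.neighborSet c = {a})
    (hu : u ∈ R.verts) (hua : u ≠ a) (huc : u ≠ c) : False := by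
  classical
  have haV : a ∈ R.verts := R.edge_vert hac
  obtain ⟨W⟩ := hconn.preconnected ⟨a, haV⟩ ⟨u, hu⟩
  have hp : W.bypass.IsPath := Walk.bypass_isPath _
  set p := W.bypass with hpdef
  clear_value p
  cases p with
  | nil => exact hua rfl
  | @cons _ z1 _ h1 p' =>
    have hz1 : (z1 : V) = c := by
      have : (z1 : V) ∈ R.neighborSet a := h1
      rwa [hNa, Set.mem_singleton_iff] at this
    cases p' with
    | nil => exact huc hz1
    | @cons _ z2 _ h2 p'' =>
      have hz2 : (z2 : V) = a := by
        have : (z2 : V) ∈ R.neighborSet (z1 : V) := h2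
        rw [hz1, hNc, Set.mem_singleton_iff] at this
        exact this
      rw [Walk.cons_isPath_iff] at hp
      apply hp.2
      rw [show (⟨a, haV⟩ : R.verts) = z2 from Subtype.ext hz2.symm]
      rw [Walk.support_cons]
      exact List.mem_cons_of_mem _ (Walk.start_mem_support p'')

open scoped Classical in
/-- badness of an endpoint. -/
noncomputable def auxBad (R : H.Subgraph) (u v x : V) : ℕ :=
  if degN R x = 1 ∧ x ≠ u ∧ x ≠ v then 1 else 0

lemma auxBad_le_one (R : H.Subgraph) (u v x : V) : auxBad R u v x ≤ 1 := by
  unfold auxBad; split <;> simp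

lemma auxBad_comm (R : H.Subgraph) (u v x : V) : auxBad R u v x = auxBad R v u x := by
  unfold auxBad
  by_cases h : degN R x = 1 ∧ x ≠ u ∧ x ≠ v
  · rw [if_pos h, if_pos (by tauto)]
  · rw [if_neg h, if_neg (by tauto)]

lemma auxBad_left (R : H.Subgraph) (u v : V) : auxBad R u v u = 0 := by
  unfold auxBad; rw [if_neg]; rintro ⟨_, h, _⟩; exact h rfl

/-- measure of a witness. -/
noncomputable def auxMeas (R : H.Subgraph) (u v a b : V) {a' b' : V} (P : H.Walk a' b') : ℕ :=
  3 * P.length + auxBad R u v a + auxBad R u v b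

lemma DetourWitness.rev {V : Type*} {H : SimpleGraph V} {R : H.Subgraph}
    {u v a b : V} {Q : H.Walk u v} {P : H.Walk a b}
    (h : DetourWitness H R Q P) : DetourWitness H R Q.reverse P.reverse := by
  obtain ⟨huv, hdu, hdv, hQp, hQle, hQint, hPp, hPlen, h9, h10⟩ := h
  have hDD : {w : V | w ∈ Q.reverse.support ∧ w ≠ v ∧ w ≠ u}
      = {w : V | w ∈ Q.support ∧ w ≠ u ∧ w ≠ v} := by
    ext w; simp only [Set.mem_setOf_eq, Walk.support_reverse, List.mem_reverse]; tauto
  refine ⟨huv.symm, hdv, hdu, hQp.reverse, ?_, ?_, hPp.reverse, ?_, ?_, ?_⟩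
  · rw [Walk.toSubgraph_reverse]; exact hQle
  · intro w hw h1 h2
    rw [Walk.support_reverse, List.mem_reverse] at hw
    exact hQint w hw h2 h1
  · rw [Walk.length_reverse, Walk.length_reverse]; exact hPlen
  · rw [hDD]; exact h10
  · rw [hDD]; exact h9

end Aux

lemma aux_key {V : Type*} [Fintype V] (H : SimpleGraph V) (Z : Set V)
    (hZnbr : ∀ z ∈ Z, ∃ x y : V, x ≠ y ∧ H.neighborSet z = {x, y} ∧ H.Adj x y)
    (R : H.Subgraph) (hR : IsSteinerTree H Z R)
    {u v a b : V} {Q : H.Walk u v} {P : H.Walk a b} (hW : DetourWitness H R Q P)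
    (hmin : ∀ (u' v' a' b' : V) (Q' : H.Walk u' v') (P' : H.Walk a' b'),
      DetourWitness H R Q' P' → auxMeas R u v a b P ≤ auxMeas R u' v' a' b' P') :
    (∀ w ∈ P.support, w ≠ a → w ≠ b →
      w ∉ ((R.verts \ {x : V | x ∈ Q.support}) ∪ {u, v})) ∧
    ¬ (degN R a = 1 ∧ a ≠ u ∧ a ≠ v) := by
  classical
  obtain ⟨huv, hdu, hdv, hQp, hQle, hQint, hPp, hPlen, ⟨ha, hu', hrau⟩, ⟨hb, hv', hrbv⟩⟩ := hW
  have hW' : DetourWitness H R Q P :=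
    ⟨huv, hdu, hdv, hQp, hQle, hQint, hPp, hPlen, ⟨ha, hu', hrau⟩, ⟨hb, hv', hrbv⟩⟩
  have hconn : R.coe.Connected := hR.1.isConnected
  -- part 1
  have hint : ∀ w ∈ P.support, w ≠ a → w ≠ b →
      w ∉ ((R.verts \ {x : V | x ∈ Q.support}) ∪ {u, v}) := by
    intro w hwsup hwa hwb hmem
    -- length facts about take/drop
    have hspec := congrArg Walk.length (P.take_spec hwsup)
    rw [Walk.length_append] at hspec
    have htake0 : (P.takeUntil w hwsup).length ≠ 0 := by
      intro h0
      exact hwa (Walk.eq_of_length_eq_zero h0).symm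
    have hdrop0 : (P.dropUntil w hwsup).length ≠ 0 := by
      intro h0
      exact hwb (Walk.eq_of_length_eq_zero h0)
    have hdroplt : (P.dropUntil w hwsup).length < P.length := by omega
    have htakelt : (P.takeUntil w hwsup).length < P.length := by omega
    rcases hmem with hdiff | huvm
    · -- w in R.verts minus Q.support
      have hw' : w ∈ (R.deleteVerts {x : V | x ∈ Q.support ∧ x ≠ u ∧ x ≠ v}).verts := by
        rw [Subgraph.deleteVerts_verts]
        exact ⟨hdiff.1, fun hc => hdiff.2 hc.1⟩
      rcases aux_dichotomy Q hQp hQle hQint hconn hu' hv' hw' with hru | hrv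
      · have hWnew : DetourWitness H R Q (P.dropUntil w hwsup) :=
          ⟨huv, hdu, hdv, hQp, hQle, hQint, hPp.dropUntil hwsup, lt_trans hdroplt hPlen,
            ⟨hw', hu', hru⟩, ⟨hb, hv', hrbv⟩⟩
        have := hmin u v w b Q _ hWnew
        unfold auxMeas at this
        have h1 := auxBad_le_one R u v w
        have h2 := auxBad_le_one R u v a
        omega
      · have hWnew : DetourWitness H R Q (P.takeUntil w hwsup) :=
          ⟨huv, hdu, hdv, hQp, hQle, hQint, hPp.takeUntil hwsup, lt_trans htakelt hPlen,
            ⟨ha, hu', hrau⟩, ⟨hw', hv', hrv⟩⟩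
        have := hmin u v a w Q _ hWnew
        unfold auxMeas at this
        have h1 := auxBad_le_one R u v w
        have h2 := auxBad_le_one R u v b
        omega
    · rcases huvm with rfl | hv2
      · -- w = u
        have hWnew : DetourWitness H R Q (P.dropUntil w hwsup) :=
          ⟨huv, hdu, hdv, hQp, hQle, hQint, hPp.dropUntil hwsup, lt_trans hdroplt hPlen,
            ⟨hu', hu', Reachable.refl _⟩, ⟨hb, hv', hrbv⟩⟩
        have := hmin w v w b Q _ hWnew
        unfold auxMeas at this
        have h1 := auxBad_le_one R w v w
        have h2 := auxBad_le_one R w v b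
        have h3 := auxBad_le_one R w v a
        omega
      · -- w = v
        rw [Set.mem_singleton_iff] at hv2
        subst hv2
        have hWnew : DetourWitness H R Q (P.takeUntil w hwsup) :=
          ⟨huv, hdu, hdv, hQp, hQle, hQint, hPp.takeUntil hwsup, lt_trans htakelt hPlen,
            ⟨ha, hu', hrau⟩, ⟨hv', hv', Reachable.refl _⟩⟩
        have := hmin u w a w Q _ hWnew
        unfold auxMeas at this
        have h1 := auxBad_le_one R u w w
        have h2 := auxBad_le_one R u w a
        have h3 := auxBad_le_one R u w b
        omega
  refine ⟨hint, ?_⟩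
  -- part 2
  rintro ⟨h1, hau, hav⟩
  have hbada : auxBad R u v a = 1 := by
    unfold auxBad; rw [if_pos ⟨h1, hau, hav⟩]
  have haZ : a ∈ Z := by rw [← hR.2]; exact h1
  obtain ⟨x, y, hxy, hNxy, hAxy⟩ := hZnbr a haZ
  obtain ⟨c, hc⟩ := Set.ncard_eq_one.mp h1
  have hRac : R.Adj a c := by
    have : c ∈ R.neighborSet a := by rw [hc]; rfl
    exact this
  have hcxy : c ∈ ({x, y} : Set V) := by
    rw [← hNxy]
    exact hRac.adj_sub
  have ha's : (⟨a, ha⟩ : (R.deleteVerts {w : V | w ∈ Q.support ∧ w ≠ u ∧ w ≠ v}).verts)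
      ≠ ⟨u, hu'⟩ := by
    intro he; exact hau (congrArg Subtype.val he)
  obtain ⟨zc, hzadj, hzreach⟩ := aux_secondvx hrau ha's
  have hzadj' := hzadj
  rw [Subgraph.coe_adj, Subgraph.deleteVerts_adj] at hzadj'
  have hzc : (zc : V) = c := by
    have : (zc : V) ∈ R.neighborSet a := hzadj'.2.2.2.2
    rwa [hc, Set.mem_singleton_iff] at this
  have hc' : c ∈ (R.deleteVerts {w : V | w ∈ Q.support ∧ w ≠ u ∧ w ≠ v}).verts := hzc ▸ zc.2
  have hrcu : (R.deleteVerts {w : V | w ∈ Q.support ∧ w ≠ u ∧ w ≠ v}).coe.Reachable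
      ⟨c, hc'⟩ ⟨u, hu'⟩ := by
    rw [show (⟨c, hc'⟩ : (R.deleteVerts {w : V | w ∈ Q.support ∧ w ≠ u ∧ w ≠ v}).verts)
      = zc from Subtype.ext hzc.symm]
    exact hzreach
  have hcD : c ∉ {w : V | w ∈ Q.support ∧ w ≠ u ∧ w ≠ v} := hzadj'.2.2.2.1 ∘ (hzc ▸ id)
  have hcV : c ∈ R.verts := R.edge_vert hRac.symm
  have huV : u ∈ R.verts := by rw [Subgraph.deleteVerts_verts] at hu'; exact hu'.1
  -- c is not a leaf of R unless c ∈ {u, v}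
  have hbadc : auxBad R u v c = 0 := by
    unfold auxBad
    rw [if_neg]
    rintro ⟨hcdeg, hcu, hcv⟩
    obtain ⟨d, hd⟩ := Set.ncard_eq_one.mp hcdeg
    have hda : d = a := by
      have : a ∈ R.neighborSet c := hRac.symm
      rw [hd, Set.mem_singleton_iff] at this
      exact this.symm
    subst hda
    exact aux_no_two_leaves hconn hRac hc hd huV (fun he => hau he.symm) (fun he => hcu he.symm)
  by_cases hP0 : P.length = 0
  · -- a = b, use triviality
    obtain rfl : a = b := Walk.eq_of_length_eq_zero hP0
    have hruv : (R.deleteVerts {w : V | w ∈ Q.support ∧ w ≠ u ∧ w ≠ v}).coe.Reachable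
        ⟨u, hu'⟩ ⟨v, hv'⟩ := by
      refine (hrau.symm).trans ?_
      rw [show (⟨a, ha⟩ : (R.deleteVerts {w : V | w ∈ Q.support ∧ w ≠ u ∧ w ≠ v}).verts)
        = ⟨a, hb⟩ from rfl]
      exact hrbv
    by_cases hQ2 : 2 ≤ Q.length
    · exact aux_noreach Q hR.1 hQp hQle hQ2 hu' hv' hruv
    · have hQpos : 0 < Q.length := by
        rcases Nat.eq_zero_or_pos Q.length with h0 | h0
        · exact absurd (Walk.eq_of_length_eq_zero h0) huv
        · exact h0
      have hWnew : DetourWitness H R Q (Walk.nil : H.Walk u u) :=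
        ⟨huv, hdu, hdv, hQp, hQle, hQint, Walk.IsPath.nil, by simpa using hQpos,
          ⟨hu', hu', Reachable.refl _⟩, ⟨hu', hv', hruv⟩⟩
      have := hmin u v u u Q _ hWnew
      unfold auxMeas at this
      rw [auxBad_left] at this
      simp only [Walk.length_nil] at this
      omega
  · -- P has positive length
    cases P with
    | nil => simp at hP0
    | @cons _ p _ hap Ptail =>
      rw [Walk.cons_isPath_iff] at hPp
      have hpxy : p ∈ ({x, y} : Set V) := by
        rw [← hNxy]; exact hap
      rw [Walk.length_cons] at hPlen
      by_cases hpc : p = c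
      · subst hpc
        have hWnew : DetourWitness H R Q Ptail :=
          ⟨huv, hdu, hdv, hQp, hQle, hQint, hPp.1, by omega,
            ⟨hc', hu', hrcu⟩, ⟨hb, hv', hrbv⟩⟩
        have := hmin u v p b Q _ hWnew
        unfold auxMeas at this
        rw [Walk.length_cons] at this
        have h2 := auxBad_le_one R u v p
        omega
      · have hAcp : H.Adj c p := by
          rcases hcxy with rfl | rfl
          · rcases hpxy with rfl | rfl
            · exact absurd rfl hpc
            · exact hAxy
          · rcases hpxy with rfl | rfl
            · exact hAxy.symm
            · exact absurd rfl hpc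
        by_cases hcb : c = b
        · subst hcb
          have hrcv : (R.deleteVerts {w : V | w ∈ Q.support ∧ w ≠ u ∧ w ≠ v}).coe.Reachable
              ⟨c, hc'⟩ ⟨v, hv'⟩ := by
            rw [show (⟨c, hc'⟩ : (R.deleteVerts {w : V | w ∈ Q.support ∧ w ≠ u ∧ w ≠ v}).verts)
              = ⟨c, hb⟩ from rfl]
            exact hrbv
          have hWnew : DetourWitness H R Q (Walk.nil : H.Walk c c) :=
            ⟨huv, hdu, hdv, hQp, hQle, hQint, Walk.IsPath.nil, by simp; omega,
              ⟨hc', hu', hrcu⟩, ⟨hc', hv', hrcv⟩⟩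
          have := hmin u v c c Q _ hWnew
          unfold auxMeas at this
          simp only [Walk.length_nil, Walk.length_cons] at this
          have h2 := auxBad_le_one R u v c
          omega
        · by_cases hcs : c ∈ Ptail.support
          · -- c is an internal vertex of P: contradiction with hint
            have hcmem : c ∈ (Walk.cons hap Ptail).support := by
              rw [Walk.support_cons]; exact List.mem_cons_of_mem _ hcs
            have hca : c ≠ a := fun he => (hRac.adj_sub).ne he.symm
            have := hint c hcmem hca hcb
            have hcQ : c ∈ Q.support := by
              by_contra hq
              exact this (Or.inl ⟨hcV, hq⟩)
            have hcu : c ≠ u := by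
              rintro rfl; exact this (Or.inr (by simp))
            have hcv : c ≠ v := by
              rintro rfl; exact this (Or.inr (by simp))
            exact hcD ⟨hcQ, hcu, hcv⟩
          · -- swap the first edge
            have hWnew : DetourWitness H R Q (Walk.cons hAcp Ptail) :=
              ⟨huv, hdu, hdv, hQp, hQle, hQint, (Walk.cons_isPath_iff _ _).mpr ⟨hPp.1, hcs⟩,
                by rw [Walk.length_cons]; omega,
                ⟨hc', hu', hrcu⟩, ⟨hb, hv', hrbv⟩⟩
            have := hmin u v c b Q _ hWnew
            unfold auxMeas at this
            rw [Walk.length_cons, Walk.length_cons] at this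
            omega

/-- If every vertex of `Z` has exactly two neighbours in `H` and these two neighbours are
adjacent, then any Steiner tree for `Z` in `H` that has a detour also has a compactly
witnessed detour. -/
theorem stmt6 {V : Type*} [Fintype V] (H : SimpleGraph V) (Z : Set V)
    (hZnbr : ∀ z ∈ Z, ∃ x y : V, x ≠ y ∧ H.neighborSet z = {x, y} ∧ H.Adj x y)
    (R : H.Subgraph) (hR : IsSteinerTree H Z R)
    (hdet : HasDetour H R) :
    ∃ (u v a b : V) (Q : H.Walk u v) (P : H.Walk a b),
      CompactDetourWitness H R Q P := by
  classical
  obtain ⟨u0, v0, a0, b0, Q0, P0, hW0⟩ := hdet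
  have hex : ∃ n : ℕ, ∃ (u v a b : V) (Q : H.Walk u v) (P : H.Walk a b),
      DetourWitness H R Q P ∧ auxMeas R u v a b P = n :=
    ⟨_, u0, v0, a0, b0, Q0, P0, hW0, rfl⟩
  obtain ⟨u, v, a, b, Q, P, hW, hMeas⟩ := Nat.find_spec hex
  have hmin : ∀ (u' v' a' b' : V) (Q' : H.Walk u' v') (P' : H.Walk a' b'),
      DetourWitness H R Q' P' → auxMeas R u v a b P ≤ auxMeas R u' v' a' b' P' := by
    intro u' v' a' b' Q' P' hW'
    rw [hMeas]
    exact Nat.find_min' hex ⟨u', v', a', b', Q', P', hW', rfl⟩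
  have hkey := aux_key H Z hZnbr R hR hW hmin
  have hMeasrev : auxMeas R v u b a P.reverse = auxMeas R u v a b P := by
    unfold auxMeas
    rw [Walk.length_reverse, auxBad_comm R v u b, auxBad_comm R v u a]
    omega
  have hminrev : ∀ (u' v' a' b' : V) (Q' : H.Walk u' v') (P' : H.Walk a' b'),
      DetourWitness H R Q' P' → auxMeas R v u b a P.reverse ≤ auxMeas R u' v' a' b' P' := by
    intro u' v' a' b' Q' P' hW'
    rw [hMeasrev]
    exact hmin u' v' a' b' Q' P' hW'
  have hkeyrev := aux_key H Z hZnbr R hR hW.rev hminrev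
  refine ⟨u, v, a, b, Q, P, hW, hkey.1, ?_, ?_⟩
  · rintro ⟨h1, h2⟩
    simp only [Set.mem_setOf_eq] at h1
    refine hkey.2 ⟨h1, ?_, ?_⟩
    · intro he; exact h2 (Or.inl he)
    · intro he; exact h2 (Or.inr he)
  · rintro ⟨h1, h2⟩
    simp only [Set.mem_setOf_eq] at h1
    refine hkeyrev.2 ⟨h1, ?_, ?_⟩
    · intro he; exact h2 (Or.inr he)
    · intro he; exact h2 (Or.inl he)
end

section
/- Fix integers k ≥ 1 and c ≥ 1 and set α_pat(k) = 100·2^{ck} and α_long(k) = 10^4·2^{ck}. Let H be a graph, Z a set of vertices of H, and R a Steiner tree for Z in H that has no detour. Let P be a long maximal degree-2 path of R with endpoint u. Then every path in H with one endpoint in A_{R,P,u} and the other endpoint in B_{R,P,u} has at least α_pat(k)/2 = 50·2^{ck} edges; that is, dist_H(A_{R,P,u}, B_{R,P,u}) ≥ |E(P'_u)| − |E(P''_u)|. -/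
/-!
Suppose a path `W` with fewer than `n / 2` edges (`n = α_pat(k)`) joins `x ∈ A` to `y ∈ B`.
Interior vertices of `Q` have degree two in `R`, so the only edges of `R` leaving the interior of
`Q` end at `u` or `v`; and since `R` is a tree, every walk of `R` from a vertex of `Q` beyond its
first `n` vertices back to `u` passes through `P'_u`. Hence `W` can be prolonged, by at most
`n / 2` edges along `P''_u`, to start at a vertex `a` joined to `u` in `R` minus the interior of
`Q`; and `y` either lies on `Q` beyond `P'_u`, at most `|Q| - n` edges from `v`, or is itself
joined to `v` in `R` minus the interior of `Q`. The resulting walk is shorter than `Q`, and its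
bypass is a detour of `R`.
-/

open SimpleGraph

/-- For a walk `Q` (the long maximal degree-2 path of `R`, oriented away from its endpoint
`u`) and `n` (= `α_pat(k)`), this is the set `A_{R,Q,u}`: the union of the set of the `n / 2`
vertices of `Q` closest to `u` (the vertex set of `P''_u`) with the vertex set of the
connected component of `R − (V(P'_u) \ {u})` containing `u`, where `P'_u` consists of the
`n` vertices of `Q` closest to `u`. -/
def sideA {V : Type*} (H : SimpleGraph V) (R : H.Subgraph) {u v : V}
    (Q : H.Walk u v) (n : ℕ) : Set V :=
  {w : V | w ∈ Q.support.take (n / 2)} ∪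
  {w : V | ∃ (hw : w ∈ (R.deleteVerts ({x : V | x ∈ Q.support.take n} \ {u})).verts)
      (hu : u ∈ (R.deleteVerts ({x : V | x ∈ Q.support.take n} \ {u})).verts),
      (R.deleteVerts ({x : V | x ∈ Q.support.take n} \ {u})).coe.Reachable ⟨w, hw⟩ ⟨u, hu⟩}

/-- The set `B_{R,Q,u} = V(R) \ (A_{R,Q,u} ∪ V(P'_u))`. -/
def sideB {V : Type*} (H : SimpleGraph V) (R : H.Subgraph) {u v : V}
    (Q : H.Walk u v) (n : ℕ) : Set V :=
  R.verts \ (sideA H R Q n ∪ {w : V | w ∈ Q.support.take n})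

namespace SimpleGraph

variable {V : Type*} {G : SimpleGraph V}

namespace Walk

def interiorVerts {u v : V} (p : G.Walk u v) : Set V :=
  {w | w ∈ p.support ∧ w ≠ u ∧ w ≠ v}

lemma toSubgraph_takeUntil_le [DecidableEq V] {u v w : V} (p : G.Walk u v)
    (h : w ∈ p.support) : (p.takeUntil w h).toSubgraph ≤ p.toSubgraph :=
  calc (p.takeUntil w h).toSubgraph
      ≤ ((p.takeUntil w h).append (p.dropUntil w h)).toSubgraph := by
        rw [toSubgraph_append]; exact le_sup_left
    _ = p.toSubgraph := by rw [p.take_spec h]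

lemma support_take_subset_support_takeUntil [DecidableEq V] {u v w : V} (p : G.Walk u v)
    (h : w ∈ p.support) {n : ℕ} (hn : w ∉ p.support.take n) :
    p.support.take n ⊆ (p.takeUntil w h).support := by
  have := (List.mem_take_iff_idxOf_lt h).not.mp hn
  rw [takeUntil_eq_take, support_copy, support_take]
  exact List.take_subset_take_left _ (by omega)

lemma snd_mem_support_take {u v : V} (p : G.Walk u v) (hp : ¬p.Nil) {n : ℕ} (hn : 2 ≤ n) :
    p.snd ∈ p.support.take n := by
  cases p with
  | nil => exact absurd nil_nil hp
  | cons h q =>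
    obtain ⟨m, rfl⟩ := Nat.exists_eq_add_of_le' hn
    rw [support_cons, ← q.cons_tail_support]
    exact List.mem_take_iff_getElem.mpr ⟨1, by simp, by simp⟩

lemma IsPath.end_notMem_support_take {u v : V} {p : G.Walk u v} (hp : p.IsPath) {n : ℕ}
    (hn : n ≤ p.length) : v ∉ p.support.take n := by
  classical
  have hv : p.support[p.length]'(by simp) = v := by
    rw [← getVert_eq_support_getElem p le_rfl, getVert_length]
  have hidx : p.support.idxOf v = p.length := by
    nth_rw 1 [← hv]
    exact hp.support_nodup.idxOf_getElem _ _
  rw [List.mem_take_iff_idxOf_lt p.end_mem_support, hidx]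
  omega

lemma IsPath.support_take_diff_subset_interiorVerts {u v : V} {p : G.Walk u v} (hp : p.IsPath)
    {n : ℕ} (hn : n ≤ p.length) : {x | x ∈ p.support.take n} \ {u} ⊆ p.interiorVerts :=
  fun _ ⟨hx, hxu⟩ =>
    ⟨List.mem_of_mem_take hx, hxu, fun h => hp.end_notMem_support_take hn (h ▸ hx)⟩

end Walk

namespace Subgraph

lemma exists_reachable_coe_iff {R : G.Subgraph} {a b : V} :
    (∃ (ha : a ∈ R.verts) (hb : b ∈ R.verts), R.coe.Reachable ⟨a, ha⟩ ⟨b, hb⟩) ↔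
      ∃ p : G.Walk a b, p.toSubgraph ≤ R := by
  constructor
  · rintro ⟨ha, hb, ⟨p⟩⟩
    exact ⟨p.map R.hom, (Walk.toSubgraph_map _ _).le.trans (coeSubgraph_le _)⟩
  · rintro ⟨p, hp⟩
    exact ⟨hp.1 p.start_mem_verts_toSubgraph, hp.1 p.end_mem_verts_toSubgraph,
      Reachable.map (inclusion hp)
        (p.toSubgraph_connected ⟨_, p.start_mem_verts_toSubgraph⟩
          ⟨_, p.end_mem_verts_toSubgraph⟩)⟩

lemma exists_coe_walk_of_toSubgraph_le {R : G.Subgraph} {a b : V} (p : G.Walk a b)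
    (hp : p.toSubgraph ≤ R) :
    ∃ (ha : a ∈ R.verts) (hb : b ∈ R.verts) (p' : R.coe.Walk ⟨a, ha⟩ ⟨b, hb⟩),
      p'.support.map Subtype.val = p.support :=
  ⟨hp.1 p.start_mem_verts_toSubgraph, hp.1 p.end_mem_verts_toSubgraph,
    p.mapToSubgraph.map (inclusion hp),
    (congrArg (List.map Subtype.val) (Walk.support_map _ _)).trans
      (List.map_map.trans ((Walk.support_map _ _).symm.trans
        (congrArg Walk.support p.map_mapToSubgraph_hom)))⟩

end Subgraph

lemma IsAcyclic.support_subset_of_isPath (hG : G.IsAcyclic) {a b : V} {q : G.Walk a b}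
    (hq : q.IsPath) (p : G.Walk a b) : q.support ⊆ p.support := by
  classical
  have : (⟨q, hq⟩ : G.Path a b) = p.toPath := (hG.subsingleton_path a b).elim _ _
  exact congrArg (fun r : G.Path a b => r.1.support) this ▸ p.support_toPath_subset_support

lemma Subgraph.support_subset_of_isAcyclic {R : G.Subgraph} (hR : R.coe.IsAcyclic) {a b : V}
    {q p : G.Walk a b} (hq : q.IsPath) (hqR : q.toSubgraph ≤ R) (hpR : p.toSubgraph ≤ R) :
    q.support ⊆ p.support := by
  obtain ⟨_, _, q', hq'⟩ := exists_coe_walk_of_toSubgraph_le q hqR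
  obtain ⟨_, _, p', hp'⟩ := exists_coe_walk_of_toSubgraph_le p hpR
  have hq'p : q'.IsPath := (Walk.isPath_def _).mpr (List.Nodup.of_map _ (hq' ▸ hq.support_nodup))
  rw [← hq', ← hp']
  exact List.map_subset _ (hR.support_subset_of_isPath hq'p p')

lemma Walk.IsPath.toSubgraph_neighborSet_eq_of_ncard_lt_three {R : G.Subgraph} {u v s : V}
    {Q : G.Walk u v} (hQ : Q.IsPath) (hQR : Q.toSubgraph ≤ R) (hs : s ∈ Q.interiorVerts)
    (hfin : (R.neighborSet s).Finite) (hdeg : (R.neighborSet s).ncard < 3) :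
    Q.toSubgraph.neighborSet s = R.neighborSet s := by
  classical
  obtain ⟨hsQ, hsu, hsv⟩ := hs
  have hi : Q.getVert (Q.support.idxOf s) = s := Q.getVert_support_idxOf hsQ
  have hi0 : Q.support.idxOf s ≠ 0 := fun h => hsu (by rw [← hi, h, Walk.getVert_zero])
  have hil : Q.support.idxOf s < Q.length :=
    Q.length_takeUntil hsQ ▸ Q.length_takeUntil_lt_length hsQ hsv
  have htwo : (Q.toSubgraph.neighborSet s).ncard = 2 :=
    hi ▸ hQ.ncard_neighborSet_toSubgraph_internal_eq_two hi0 hil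
  exact Set.eq_of_subset_of_ncard_le (Subgraph.neighborSet_subset_of_subgraph hQR s)
    (by omega) hfin

lemma Walk.IsPath.mem_pair_of_adj_interiorVerts [Finite V] {R : G.Subgraph} {u v : V}
    {Q : G.Walk u v} (hQ : Q.IsPath) (hQR : Q.toSubgraph ≤ R)
    (hdeg : ∀ s ∈ Q.interiorVerts, (R.neighborSet s).ncard < 3) :
    ∀ s ∈ Q.interiorVerts, ∀ y, R.Adj s y → y ∉ Q.interiorVerts →
      y ∈ ({u, v} : Set V) := by
  intro s hs y hsy hy
  have hQsy : Q.toSubgraph.Adj s y := by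
    rw [← Subgraph.mem_neighborSet,
      hQ.toSubgraph_neighborSet_eq_of_ncard_lt_three hQR hs (Set.toFinite _) (hdeg s hs)]
    exact hsy
  by_contra h
  simp only [Set.mem_insert_iff, Set.mem_singleton_iff, not_or] at h
  exact hy ⟨Q.mem_support_of_adj_toSubgraph hQsy.symm, h⟩

lemma Subgraph.exists_walk_deleteVerts_of_adj_mem {R : G.Subgraph} {S X : Set V}
    (hSX : ∀ s ∈ S, ∀ y, R.Adj s y → y ∉ S → y ∈ X) {w t : V} (p : G.Walk w t)
    (hp : p.toSubgraph ≤ R) (hw : w ∉ S) (ht : t ∈ X) :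
    ∃ x ∈ X, ∃ q : G.Walk w x, q.toSubgraph ≤ R.deleteVerts S := by
  induction p with
  | nil => exact ⟨_, ht, .nil, (singletonSubgraph_le_iff _ _).mpr ⟨hp.1 (by simp), hw⟩⟩
  | @cons w y t h p ih =>
    have hwy : R.Adj w y := hp.2 (by simp [Walk.toSubgraph])
    by_cases hy : y ∈ S
    · exact ⟨w, hSX y hy w hwy.symm hw, .nil,
        (singletonSubgraph_le_iff _ _).mpr ⟨hwy.fst_mem, hw⟩⟩
    · obtain ⟨x, hx, q, hq⟩ := ih (le_sup_right.trans hp) hy ht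
      exact ⟨x, hx, .cons h q, sup_le (subgraphOfAdj_le_of_adj _
        (deleteVerts_adj.mpr ⟨hwy.fst_mem, hw, hwy.snd_mem, hy, hwy⟩)) hq⟩

/-- Any walk of the tree `R` from `s` back to `u` contains `Q.takeUntil s`, hence `Q.snd`. -/
lemma Subgraph.not_toSubgraph_le_deleteVerts_support_take {R : G.Subgraph}
    (hR : R.coe.IsAcyclic) {u v s : V} {Q : G.Walk u v} (hQ : Q.IsPath) (hQR : Q.toSubgraph ≤ R)
    {n : ℕ} (hn : 2 ≤ n) (hs : s ∈ Q.support) (hsn : s ∉ Q.support.take n)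
    (p : G.Walk s u) :
    ¬ p.toSubgraph ≤ R.deleteVerts ({x | x ∈ Q.support.take n} \ {u}) := by
  classical
  intro hp
  have hQnil : ¬ Q.Nil := by
    rw [Walk.nil_iff_support_eq]
    intro h
    rw [h] at hs hsn
    obtain rfl := List.mem_singleton.mp hs
    exact hsn (List.mem_take_iff_getElem.mpr ⟨0, by simp; omega, rfl⟩)
  have hsnd : Q.snd ∈ p.reverse.support :=
    support_subset_of_isAcyclic hR (hQ.takeUntil hs) ((Q.toSubgraph_takeUntil_le hs).trans hQR)
      (by rw [Walk.toSubgraph_reverse]; exact hp.trans deleteVerts_le)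
      (Q.support_take_subset_support_takeUntil hs hsn (Q.snd_mem_support_take hQnil hn))
  rw [Walk.support_reverse, List.mem_reverse] at hsnd
  exact (verts_mono hp (p.mem_verts_toSubgraph.mpr hsnd)).2
    ⟨Q.snd_mem_support_take hQnil hn, (Q.adj_snd hQnil).ne'⟩

end SimpleGraph

section

variable {V : Type*} {H : SimpleGraph V} {R : H.Subgraph} {u v : V} {Q : H.Walk u v} {n : ℕ}

lemma exists_walk_deleteVerts_interiorVerts_of_mem_sideA (hR : R.coe.IsAcyclic)
    (hQ : Q.IsPath) (hQR : Q.toSubgraph ≤ R)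
    (hSX : ∀ s ∈ Q.interiorVerts, ∀ y, R.Adj s y → y ∉ Q.interiorVerts →
      y ∈ ({u, v} : Set V))
    (hn : 2 ≤ n) (hnQ : n ≤ Q.length) {x y : V} (hx : x ∈ sideA H R Q n) (W : H.Walk x y) :
    ∃ a, ∃ Wa : H.Walk a y, Wa.length ≤ n / 2 + W.length ∧
      ∃ p : H.Walk a u, p.toSubgraph ≤ R.deleteVerts Q.interiorVerts := by
  classical
  rcases hx with hx | hx
  · refine ⟨u, (Q.takeUntil x (List.mem_of_mem_take hx)).append W, ?_, .nil,
      (singletonSubgraph_le_iff _ _).mpr ⟨?_, fun h => h.2.1 rfl⟩⟩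
    · have := (List.mem_take_iff_idxOf_lt (List.mem_of_mem_take hx)).mp hx
      rw [Walk.length_append, Walk.length_takeUntil]
      omega
    · exact Subgraph.verts_mono hQR Q.start_mem_verts_toSubgraph
  obtain ⟨p, hp⟩ := Subgraph.exists_reachable_coe_iff.mp hx
  have hxS : x ∉ Q.interiorVerts := fun ⟨hxQ, hxu, _⟩ =>
    Subgraph.not_toSubgraph_le_deleteVerts_support_take hR hQ hQR hn hxQ
      (fun h => (Subgraph.verts_mono hp p.start_mem_verts_toSubgraph).2 ⟨h, hxu⟩) p hp
  obtain ⟨z, hz, q, hq⟩ :=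
    Subgraph.exists_walk_deleteVerts_of_adj_mem hSX p (hp.trans Subgraph.deleteVerts_le) hxS
      (Set.mem_insert u _)
  rcases hz with rfl | rfl
  · exact ⟨x, W, by omega, q, hq⟩
  -- `q.reverse.append p` would join `v` to `u` without meeting `P'_u`.
  · refine absurd ?_ (Subgraph.not_toSubgraph_le_deleteVerts_support_take hR hQ hQR hn
      Q.end_mem_support (hQ.end_notMem_support_take hnQ) (q.reverse.append p))
    rw [Walk.toSubgraph_append, Walk.toSubgraph_reverse]
    exact sup_le (hq.trans (Subgraph.deleteVerts_anti
      (hQ.support_take_diff_subset_interiorVerts hnQ))) hp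

lemma exists_walk_deleteVerts_interiorVerts_of_mem_sideB (hR : R.coe.IsTree)
    (hQ : Q.IsPath) (hQR : Q.toSubgraph ≤ R)
    (hSX : ∀ s ∈ Q.interiorVerts, ∀ y, R.Adj s y → y ∉ Q.interiorVerts →
      y ∈ ({u, v} : Set V))
    (hnQ : n ≤ Q.length) {y : V} (hy : y ∈ sideB H R Q n) :
    ∃ b, ∃ Wb : H.Walk y b, Wb.length + n ≤ Q.length ∧
      ∃ p : H.Walk b v, p.toSubgraph ≤ R.deleteVerts Q.interiorVerts := by
  classical
  obtain ⟨hyR, hyAT⟩ := hy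
  have hvR : v ∈ R.verts := Subgraph.verts_mono hQR Q.end_mem_verts_toSubgraph
  by_cases hyQ : y ∈ Q.support
  · refine ⟨v, Q.dropUntil y hyQ, ?_, .nil,
      (singletonSubgraph_le_iff _ _).mpr ⟨hvR, fun h => h.2.2 rfl⟩⟩
    have := (List.mem_take_iff_idxOf_lt hyQ).not.mp (fun h => hyAT (Or.inr h))
    have := Q.length_takeUntil_le_length hyQ
    rw [Walk.length_dropUntil]
    rw [Walk.length_takeUntil] at this
    omega
  obtain ⟨p, hp⟩ :=
    Subgraph.exists_reachable_coe_iff.mp ⟨hyR, hvR, hR.connected.preconnected _ _⟩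
  obtain ⟨z, hz, q, hq⟩ := Subgraph.exists_walk_deleteVerts_of_adj_mem hSX p hp
    (fun h => hyQ h.1) (Set.mem_insert_of_mem u rfl)
  rcases hz with rfl | rfl
  -- `y` would then lie in the component of `u` in `R - P'_u`, i.e. in `A`.
  · refine absurd (Or.inl (Or.inr ?_)) hyAT
    exact Subgraph.exists_reachable_coe_iff.mpr
      ⟨q, hq.trans (Subgraph.deleteVerts_anti (hQ.support_take_diff_subset_interiorVerts hnQ))⟩
  · exact ⟨y, .nil, by simpa using hnQ, q, hq⟩

end

theorem stmt8_general {V : Type*} [Fintype V] (H : SimpleGraph V) (Z : Set V)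
    (k c : ℕ)
    (R : H.Subgraph) (hR : IsSteinerTree H Z R) (hnd : ¬ HasDetour H R)
    {u v : V} (Q : H.Walk u v) (hQp : Q.IsPath) (hQR : Q.toSubgraph ≤ R) (huv : u ≠ v)
    (hu : degN R u = 1 ∨ 3 ≤ degN R u) (hv : degN R v = 1 ∨ 3 ≤ degN R v)
    (hnear : ∀ w ∈ Q.support, w ≠ u → w ≠ v → degN R w < 3)
    (hlong : 10 ^ 4 * 2 ^ (c * k) ≤ Q.length) :
    ∀ (x y : V) (W : H.Walk x y), W.IsPath →
      x ∈ sideA H R Q (100 * 2 ^ (c * k)) → y ∈ sideB H R Q (100 * 2 ^ (c * k)) →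
      50 * 2 ^ (c * k) ≤ W.length := by
  classical
  intro x y W _ hx hy
  by_contra! hW
  have hpow : 1 ≤ 2 ^ (c * k) := Nat.one_le_two_pow
  have hSX := hQp.mem_pair_of_adj_interiorVerts hQR fun s hs => hnear s hs.1 hs.2.1 hs.2.2
  obtain ⟨a, Wa, hWa, pa, hpa⟩ := exists_walk_deleteVerts_interiorVerts_of_mem_sideA
    hR.1.isAcyclic hQp hQR hSX (by omega) (by omega) hx W
  obtain ⟨b, Wb, hWb, pb, hpb⟩ := exists_walk_deleteVerts_interiorVerts_of_mem_sideB
    hR.1 hQp hQR hSX (by omega) hy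
  have hshort : (Wa.append Wb).bypass.length < Q.length :=
    calc (Wa.append Wb).bypass.length ≤ Wa.length + Wb.length :=
          (Wa.append Wb).length_bypass_le_length.trans_eq (Wa.length_append Wb)
      _ < Q.length := by omega
  exact hnd ⟨u, v, a, b, Q, _, huv, hu, hv, hQp, hQR, hnear, (Wa.append Wb).bypass_isPath,
    hshort, Subgraph.exists_reachable_coe_iff.mpr ⟨pa, hpa⟩,
    Subgraph.exists_reachable_coe_iff.mpr ⟨pb, hpb⟩⟩

/-- Let `R` be a Steiner tree with no detour and let `Q` be a long maximal degree-2 path of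
`R` with endpoint `u` (long: at least `α_long(k) = 10^4·2^(ck)` edges).  Then every path of
`H` with one endpoint in `A_{R,Q,u}` and the other in `B_{R,Q,u}` has at least
`α_pat(k)/2 = 50·2^(ck) = |E(P'_u)| - |E(P''_u)|` edges. -/
theorem stmt8 {V : Type*} [Fintype V] (H : SimpleGraph V) (Z : Set V)
    (k c : ℕ) (hk : 1 ≤ k) (hc : 1 ≤ c)
    (R : H.Subgraph) (hR : IsSteinerTree H Z R) (hnd : ¬ HasDetour H R)
    {u v : V} (Q : H.Walk u v) (hQp : Q.IsPath) (hQR : Q.toSubgraph ≤ R) (huv : u ≠ v)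
    (hu : degN R u = 1 ∨ 3 ≤ degN R u) (hv : degN R v = 1 ∨ 3 ≤ degN R v)
    (hnear : ∀ w ∈ Q.support, w ≠ u → w ≠ v → degN R w < 3)
    (hlong : 10 ^ 4 * 2 ^ (c * k) ≤ Q.length) :
    ∀ (x y : V) (W : H.Walk x y), W.IsPath →
      x ∈ sideA H R Q (100 * 2 ^ (c * k)) → y ∈ sideB H R Q (100 * 2 ^ (c * k)) →
      50 * 2 ^ (c * k) ≤ W.length :=
  stmt8_general H Z k c R hR hnd Q hQp hQR huv hu hv hnear hlong
end

section
/- Let H be a graph, let u and v be vertices of H connected by a path in H, and let 𝓕 be a collection of pairwise vertex-disjoint paths in H. Then there exists a path P in H between u and v with the following property: there do not exist three vertices x, y, z ∈ V(P) such that (i) dist_P(u,x) < dist_P(u,y) < dist_P(u,z), and (ii) there exist a path in 𝓕 that contains both x and z and a different path in 𝓕 that contains y. -/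
/-!
Label each vertex by the index of the path of `F` through it (`none` off `⋃ F`), and pick a
`u`–`v` path `P` that minimises, among all `u`–`v` walks, the number of edges whose endpoints
carry different labels; `bypass` never increases this count. A pattern `x, y, z` along `P` with
`x, z ∈ F i` and `y ∈ F j` would let us replace the stretch of `P` from `x` to `z` by a walk
inside `F i`, which has no label changes, whereas the stretch from `x` to `y` has at least one.
-/

open SimpleGraph

namespace SimpleGraph.Walk

variable {V : Type*} {G : SimpleGraph V} {β : Type*} [DecidableEq β]

def labelChanges (f : V → β) {u v : V} (p : G.Walk u v) : ℕ :=
  p.darts.countP fun d => f d.fst ≠ f d.snd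

variable (f : V → β)

@[simp]
lemma labelChanges_append {u v w : V} (p : G.Walk u v) (q : G.Walk v w) :
    (p.append q).labelChanges f = p.labelChanges f + q.labelChanges f := by
  simp [labelChanges, List.countP_append]

lemma labelChanges_bypass_le [DecidableEq V] {u v : V} (p : G.Walk u v) :
    p.bypass.labelChanges f ≤ p.labelChanges f :=
  p.darts_bypass_sublist_darts.countP_le

lemma labelChanges_takeUntil_add_dropUntil [DecidableEq V] {u v w : V} (p : G.Walk u v)
    (h : w ∈ p.support) :
    (p.takeUntil w h).labelChanges f + (p.dropUntil w h).labelChanges f = p.labelChanges f := by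
  rw [← labelChanges_append, take_spec]

lemma labelChanges_eq_zero_of_forall_mem_support {u v : V} {p : G.Walk u v} {b : β}
    (h : ∀ w ∈ p.support, f w = b) : p.labelChanges f = 0 := by
  rw [labelChanges, List.countP_eq_zero]
  intro d hd
  simp [h _ (p.dart_fst_mem_support_of_mem_darts hd), h _ (p.dart_snd_mem_support_of_mem_darts hd)]

lemma labelChanges_pos_of_ne {u v : V} (p : G.Walk u v) (huv : f u ≠ f v) :
    0 < p.labelChanges f := by
  induction p with
  | nil => exact absurd rfl huv
  | @cons a b _ _ p ih =>
    by_cases hab : f a = f b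
    · simpa [labelChanges, hab] using ih (hab ▸ huv)
    · simp [labelChanges, hab]

lemma mem_support_takeUntil_of_length_lt [DecidableEq V] {u v x y : V} {p : G.Walk u v}
    (hx : x ∈ p.support) (hy : y ∈ p.support)
    (hxy : (p.takeUntil x hx).length < (p.takeUntil y hy).length) :
    x ∈ (p.takeUntil y hy).support := by
  rw [← p.getVert_length_takeUntil hx, ← getVert_takeUntil hy hxy.le]
  exact getVert_mem_support _ _

lemma mem_support_dropUntil_of_length_lt [DecidableEq V] {u v y z : V} {p : G.Walk u v}
    (hy : y ∈ p.support) (hz : z ∈ p.support)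
    (hyz : (p.takeUntil y hy).length < (p.takeUntil z hz).length) :
    z ∈ (p.dropUntil y hy).support := by
  by_contra hzD
  have hzT : z ∈ (p.takeUntil y hy).support :=
    ((mem_support_append_iff _ _).1 ((p.take_spec hy).symm ▸ hz)).resolve_right hzD
  have := (p.takeUntil y hy).length_takeUntil_le_length hzT
  rw [takeUntil_takeUntil] at this
  omega

lemma exists_walk_support_subset [DecidableEq V] {u v x z : V} (p : G.Walk u v)
    (hx : x ∈ p.support) (hz : z ∈ p.support) :
    ∃ q : G.Walk x z, q.support ⊆ p.support :=
  ⟨(p.takeUntil x hx).reverse.append (p.takeUntil z hz), by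
    intro w hw
    rcases (mem_support_append_iff _ _).1 hw with h | h
    · exact p.support_takeUntil_subset_support hx (by simpa using h)
    · exact p.support_takeUntil_subset_support hz h⟩

end SimpleGraph.Walk

namespace SimpleGraph.Reachable

variable {V : Type*} {G : SimpleGraph V} {β : Type*} [DecidableEq β]

lemma exists_isPath_forall_labelChanges_le [DecidableEq V] {u v : V} (h : G.Reachable u v)
    (f : V → β) :
    ∃ p : G.Walk u v, p.IsPath ∧ ∀ q : G.Walk u v, p.labelChanges f ≤ q.labelChanges f := by
  have : Nonempty (G.Walk u v) := h
  let p := Function.argmin (Walk.labelChanges f : G.Walk u v → ℕ)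
  exact ⟨p.bypass, p.bypass_isPath, fun q =>
    (p.labelChanges_bypass_le f).trans (Function.argmin_le _ q)⟩

end SimpleGraph.Reachable

lemma exists_forall_mem_eq_some_of_disjoint {α ι : Type*} (S : ι → Set α)
    (hdisj : ∀ i j, i ≠ j → ∀ w ∈ S i, w ∉ S j) :
    ∃ f : α → Option ι, ∀ i, ∀ w ∈ S i, f w = some i := by
  classical
  refine ⟨fun w => if h : ∃ i, w ∈ S i then some h.choose else none, fun i w hw => ?_⟩
  have h : ∃ i, w ∈ S i := ⟨i, hw⟩
  simp only [dif_pos h, Option.some_inj]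
  by_contra hne
  exact hdisj _ _ hne w h.choose_spec hw

theorem stmt10_general {V : Type*} [DecidableEq V] (H : SimpleGraph V) (u v : V)
    (hconn : H.Reachable u v)
    {ι : Type*} (s t : ι → V) (F : ∀ i : ι, H.Walk (s i) (t i))
    (hdisj : ∀ i j, i ≠ j → ∀ w : V, w ∈ (F i).support → w ∉ (F j).support) :
    ∃ P : H.Walk u v, P.IsPath ∧
      ¬ ∃ (x y z : V) (hx : x ∈ P.support) (hy : y ∈ P.support) (hz : z ∈ P.support),
        (P.takeUntil x hx).length < (P.takeUntil y hy).length ∧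
        (P.takeUntil y hy).length < (P.takeUntil z hz).length ∧
        ∃ i j : ι, i ≠ j ∧ x ∈ (F i).support ∧ z ∈ (F i).support ∧ y ∈ (F j).support := by
  classical
  obtain ⟨f, hf⟩ :=
    exists_forall_mem_eq_some_of_disjoint (fun i => {w | w ∈ (F i).support}) hdisj
  obtain ⟨P, hP, hmin⟩ := hconn.exists_isPath_forall_labelChanges_le f
  refine ⟨P, hP, ?_⟩
  rintro ⟨x, y, z, hx, hy, hz, hxy, hyz, i, j, hij, hxi, hzi, hyj⟩
  have hsplitP := P.labelChanges_takeUntil_add_dropUntil f hy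
  set T := P.takeUntil y hy
  set D := P.dropUntil y hy
  have hxT : x ∈ T.support := Walk.mem_support_takeUntil_of_length_lt hx hy hxy
  have hzD : z ∈ D.support := Walk.mem_support_dropUntil_of_length_lt hy hz hyz
  obtain ⟨R, hR⟩ := (F i).exists_walk_support_subset hxi hzi
  have hR0 : R.labelChanges f = 0 :=
    Walk.labelChanges_eq_zero_of_forall_mem_support f fun w hw => hf i w (hR hw)
  have hdetour : 0 < (T.dropUntil x hxT).labelChanges f :=
    Walk.labelChanges_pos_of_ne f _ (by simp [hf i x hxi, hf j y hyj, hij])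
  have hshort := hmin ((T.takeUntil x hxT).append (R.append (D.dropUntil z hzD)))
  have hsplitT := T.labelChanges_takeUntil_add_dropUntil f hxT
  have hsplitD := D.labelChanges_takeUntil_add_dropUntil f hzD
  simp only [Walk.labelChanges_append, hR0] at hshort
  omega

/-- Exchange lemma: given vertices `u, v` connected in `H` and a collection `F` of pairwise
vertex-disjoint paths of `H`, there is a path `P` of `H` from `u` to `v` such that no three
vertices `x, y, z` occur in this order along `P` with `x` and `z` on one path of the
collection and `y` on a different path of the collection.  (The position of a vertex `w`
along `P` is measured by the length of the subpath of `P` from `u` to `w`.) -/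
theorem stmt10 {V : Type*} [DecidableEq V] (H : SimpleGraph V) (u v : V)
    (hconn : H.Reachable u v)
    {ι : Type*} (s t : ι → V) (F : ∀ i : ι, H.Walk (s i) (t i))
    (hpath : ∀ i, (F i).IsPath)
    (hdisj : ∀ i j, i ≠ j → ∀ w : V, w ∈ (F i).support → w ∉ (F j).support) :
    ∃ P : H.Walk u v, P.IsPath ∧
      ¬ ∃ (x y z : V) (hx : x ∈ P.support) (hy : y ∈ P.support) (hz : z ∈ P.support),
        (P.takeUntil x hx).length < (P.takeUntil y hy).length ∧
        (P.takeUntil y hy).length < (P.takeUntil z hz).length ∧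
        ∃ i j : ι, i ≠ j ∧ x ∈ (F i).support ∧ z ∈ (F i).support ∧ y ∈ (F j).support :=
  stmt10_general H u v hconn s t F hdisj
end

section
/- Let R be a Steiner tree for a vertex set Z with |Z| = 2k (k ≥ 1) in a graph H. Let V*₂(R) be the set of vertices of degree 2 in R adjacent in R to a vertex of V_{=1}(R) ∪ V_{≥3}(R), and V*(R) = V_{=1}(R) ∪ V_{≥3}(R) ∪ V*₂(R). For each v ∈ V*(R), fix an enumeration e¹, …, e^{r_v} of the edges of R incident to v, and let pairing_v be a non-crossing pairing at v: for v ∈ V_{≥3}(R) a set of unordered pairs of distinct edges of R incident to v; for v ∈ V*₂(R) a set of pairs of (possibly equal) edges of R incident to v; and for v ∈ V_{=1}(R) either the empty set or the singleton consisting of the pair formed by the unique incident edge taken twice — such that there do not exist two pairs (e^i,e^j), (e^x,e^y) ∈ pairing_v with i < j and x < y satisfying i < x < j < y or x < i < y < j. Then Σ_{v ∈ V*(R)} |pairing_v| ≤ 48k. -/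
open SimpleGraph

/-- `v` belongs to `V*(R) = V₌₁(R) ∪ V₊₃(R) ∪ V*₂(R)`, where `V*₂(R)` is the set of
degree-2 vertices of `R` adjacent in `R` to a vertex of degree `1` or `≥ 3`. -/
def InVStar {V : Type*} {H : SimpleGraph V} (R : H.Subgraph) (v : V) : Prop :=
  degN R v = 1 ∨ 3 ≤ degN R v ∨
    (degN R v = 2 ∧ ∃ u : V, R.Adj v u ∧ (degN R u = 1 ∨ 3 ≤ degN R u))

/-!
At a vertex of degree `d ≤ 3` there are at most `d(d+1)/2 ≤ 2d` pairs of incident edges at all,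
and a non-crossing family of pairs of distinct elements of a `d`-element chain has at most `2d`
members: a pair is determined by its left end if it is the longest pair there, and by its right
end otherwise. So the sum is at most `2 ∑_{V*} deg`. A vertex of `V*₂` has degree 2 and is a
neighbour of a leaf or branch vertex, whence `∑_{V*} deg ≤ 3 ∑_{V₌₁ ∪ V≥3} deg`; in a tree,
`∑ (deg - 2) = -2` bounds the latter by four times the number `2k` of leaves.
-/

open Finset

def IsNoncrossing {α : Type*} [LinearOrder α] (F : Finset (Sym2 α)) : Prop :=
  ¬ ∃ i j x y : α, s(i, j) ∈ F ∧ s(x, y) ∈ F ∧ i < j ∧ x < y ∧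
    ((i < x ∧ x < j ∧ j < y) ∨ (x < i ∧ i < y ∧ y < j))

theorem card_le_two_mul_of_isNoncrossing {α : Type*} [LinearOrder α] [Fintype α]
    {F : Finset (Sym2 α)} (hdiag : ∀ p ∈ F, ¬ p.IsDiag) (hF : IsNoncrossing F) :
    F.card ≤ 2 * Fintype.card α := by
  classical
  have mk_inf_sup (p : Sym2 α) : s(p.inf, p.sup) = p := Sym2.sortEquiv.symm_apply_apply p
  have inf_lt_sup : ∀ p ∈ F, p.inf < p.sup := by
    intro p hp
    induction p using Sym2.ind with
    | _ a b => exact inf_lt_sup.mpr (by simpa using hdiag _ hp)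
  set IsLongest : Sym2 α → Prop := fun p => ∀ q ∈ F, q.inf = p.inf → q.sup ≤ p.sup
  have inf_injOn : Set.InjOn Sym2.inf {p | p ∈ F ∧ IsLongest p} := by
    rintro p ⟨hp, hp_max⟩ q ⟨hq, hq_max⟩ hpq
    exact Sym2.inf_eq_inf_and_sup_eq_sup.mp
      ⟨hpq, le_antisymm (hq_max p hp hpq) (hp_max q hq hpq.symm)⟩
  -- a longer pair `d` at the left end of `q` would cross `p`
  have not_inf_lt : ∀ p ∈ F, ∀ q ∈ F, ¬ IsLongest q → p.sup = q.sup → ¬ p.inf < q.inf := by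
    intro p hp q hq hq_max hsup hlt
    simp only [IsLongest, not_forall, not_le, exists_prop] at hq_max
    obtain ⟨d, hd, hdinf, hdsup⟩ := hq_max
    refine hF ⟨p.inf, p.sup, d.inf, d.sup, by rwa [mk_inf_sup], by rwa [mk_inf_sup],
      inf_lt_sup p hp, inf_lt_sup d hd, Or.inl ⟨?_, ?_, ?_⟩⟩
    · rwa [hdinf]
    · rw [hdinf, hsup]; exact inf_lt_sup q hq
    · rwa [hsup]
  have sup_injOn : Set.InjOn Sym2.sup {p | p ∈ F ∧ ¬ IsLongest p} := by
    rintro p ⟨hp, hp_max⟩ q ⟨hq, hq_max⟩ hpq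
    exact Sym2.inf_eq_inf_and_sup_eq_sup.mp ⟨le_antisymm
      (not_lt.mp (not_inf_lt q hq p hp hp_max hpq.symm))
      (not_lt.mp (not_inf_lt p hp q hq hq_max hpq)), hpq⟩
  calc F.card = (F.filter IsLongest).card + (F.filter (¬ IsLongest ·)).card :=
        (card_filter_add_card_filter_not _).symm
    _ ≤ Fintype.card α + Fintype.card α := by
      gcongr
      · exact card_le_card_of_injOn Sym2.inf (fun _ _ => mem_univ _)
          (by rwa [coe_filter])
      · exact card_le_card_of_injOn Sym2.sup (fun _ _ => mem_univ _)
          (by rwa [coe_filter])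
    _ = 2 * Fintype.card α := (two_mul _).symm

theorem card_le_two_mul_of_card_le_three {α : Type*} [Fintype α] (F : Finset (Sym2 α))
    (hα : Fintype.card α ≤ 3) : F.card ≤ 2 * Fintype.card α := by
  classical
  calc F.card ≤ Fintype.card (Sym2 α) := F.card_le_univ
    _ = (Fintype.card α + 1).choose 2 := Sym2.card
    _ ≤ 2 * Fintype.card α := by interval_cases Fintype.card α <;> decide

namespace SimpleGraph

variable {W : Type*} [Fintype W] {G : SimpleGraph W} [DecidableRel G.Adj]

theorem IsTree.card_filter_degree_eq_zero_le_one (hG : G.IsTree) :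
    (univ.filter (G.degree · = 0)).card ≤ 1 := by
  rcases subsingleton_or_nontrivial W with hW | hW
  · exact (card_le_univ _).trans (Fintype.card_le_one_iff_subsingleton.mpr hW)
  · simp [filter_eq_empty_iff.mpr fun v _ =>
      (hG.connected.preconnected.degree_pos_of_nontrivial v).ne']

theorem IsTree.sum_degree_leaves_branch_le (hG : G.IsTree) :
    ∑ v ∈ univ.filter (fun v => G.degree v = 1 ∨ 3 ≤ G.degree v), G.degree v ≤
      4 * (univ.filter (G.degree · = 1)).card := by
  classical
  have handshake : ∑ v, G.degree v + 2 = 2 * Fintype.card W := by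
    rw [sum_degrees_eq_twice_card_edges, ← hG.card_edgeFinset]; ring
  -- summed over all vertices, with `∑ deg = 2 |W| - 2` and at most one isolated vertex
  have pointwise (d : ℕ) : (if d = 1 ∨ 3 ≤ d then d else 0) + 6 ≤
      4 * (if d = 1 then 1 else 0) + 6 * (if d = 0 then 1 else 0) + 3 * d := by
    split_ifs <;> omega
  have summed := sum_le_sum fun v (_ : v ∈ univ) => pointwise (G.degree v)
  simp only [sum_add_distrib, ← mul_sum, sum_const, smul_eq_mul,
    card_univ, ← sum_filter] at summed
  have := hG.card_filter_degree_eq_zero_le_one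
  omega

end SimpleGraph

section Subgraph

variable {V : Type*} {H : SimpleGraph V} (R : H.Subgraph)

theorem degN_eq_zero_of_notMem {v : V} (hv : v ∉ R.verts) : degN R v = 0 := by
  rw [degN, Set.eq_empty_of_forall_notMem (s := R.neighborSet v) fun w hw => hv hw.fst_mem,
    Set.ncard_empty]

theorem degN_eq_coe_degree (v : R.verts) [Fintype (R.coe.neighborSet v)] :
    degN R v = R.coe.degree v := by
  rw [← card_neighborSet_eq_degree, ← Nat.card_eq_fintype_card,
    Nat.card_congr (Subgraph.coeNeighborSetEquiv v), Nat.card_coe_set_eq, degN]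

variable [Fintype V]

theorem sum_degN_eq_sum_coe_degree [Fintype R.verts] [DecidableRel R.coe.Adj]
    (f : ℕ → ℕ) (hf : f 0 = 0) : ∑ v, f (degN R v) = ∑ v : R.verts, f (R.coe.degree v) := by
  calc ∑ v, f (degN R v) = ∑ v ∈ R.verts.toFinset, f (degN R v) := by
        refine (sum_subset (subset_univ _) fun v _ hv => ?_).symm
        rw [degN_eq_zero_of_notMem R (by simpa using hv), hf]
    _ = ∑ v : R.verts, f (degN R v) := sum_subtype _ (fun _ => Set.mem_toFinset) _
    _ = ∑ v : R.verts, f (R.coe.degree v) := by simp only [degN_eq_coe_degree]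

theorem sum_degN_leaves_branch_le (hR : R.coe.IsTree) :
    ∑ v ∈ univ.filter (fun v => degN R v = 1 ∨ 3 ≤ degN R v), degN R v ≤
      4 * (univ.filter (degN R · = 1)).card := by
  classical
  have : Fintype R.verts := Fintype.ofFinite _
  have key := hR.sum_degree_leaves_branch_le
  rw [sum_filter, card_filter] at key ⊢
  rwa [sum_degN_eq_sum_coe_degree R (fun d => if d = 1 ∨ 3 ≤ d then d else 0) rfl,
    sum_degN_eq_sum_coe_degree R (fun d => if d = 1 then 1 else 0) rfl]

theorem sum_degN_inVStar_le [DecidablePred (InVStar R)] :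
    ∑ v ∈ univ.filter (InVStar R), degN R v ≤
      3 * ∑ v ∈ univ.filter (fun v => degN R v = 1 ∨ 3 ≤ degN R v), degN R v := by
  classical
  set T := univ.filter (fun v => degN R v = 1 ∨ 3 ≤ degN R v)
  set S := univ.filter
    (fun v => degN R v = 2 ∧ ∃ u, R.Adj v u ∧ (degN R u = 1 ∨ 3 ≤ degN R u))
  have hsplit : univ.filter (InVStar R) = T ∪ S := by
    rw [← filter_or]
    exact filter_congr fun v _ => or_assoc.symm
  have hdisj : Disjoint T S := disjoint_filter.mpr fun v _ hT hS => by omega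
  have hS_deg : ∑ v ∈ S, degN R v = 2 * S.card := by
    rw [sum_congr rfl fun v hv => (mem_filter.mp hv).2.1, sum_const, smul_eq_mul, mul_comm]
  have hS_card : S.card ≤ ∑ u ∈ T, degN R u := by
    have hsub : S ⊆ T.biUnion fun u => (R.neighborSet u).toFinset := by
      intro v hv
      obtain ⟨-, u, hvu, hu⟩ := (mem_filter.mp hv).2
      exact mem_biUnion.mpr
        ⟨u, mem_filter.mpr ⟨mem_univ _, hu⟩, Set.mem_toFinset.mpr hvu.symm⟩
    calc S.card ≤ _ := card_le_card hsub
      _ ≤ ∑ u ∈ T, (R.neighborSet u).toFinset.card := card_biUnion_le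
      _ = ∑ u ∈ T, degN R u := by simp only [degN, Set.ncard_eq_toFinset_card']
  rw [hsplit, sum_union hdisj]
  omega

end Subgraph

theorem stmt12_general {V : Type*} [Fintype V] (H : SimpleGraph V) (Z : Set V)
    (k : ℕ) (hZ : Z.ncard = 2 * k)
    (R : H.Subgraph) (hR : IsSteinerTree H Z R)
    [DecidablePred (InVStar R)]
    (pairing : ∀ v : V, Finset (Sym2 (Fin (degN R v))))
    (hnc : ∀ v : V, InVStar R v → ¬ ∃ i j x y : Fin (degN R v),
      s(i, j) ∈ pairing v ∧ s(x, y) ∈ pairing v ∧ i < j ∧ x < y ∧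
      ((i < x ∧ x < j ∧ j < y) ∨ (x < i ∧ i < y ∧ y < j)))
    (hbranch : ∀ v : V, 3 ≤ degN R v → ∀ p ∈ pairing v, ¬ p.IsDiag) :
    ∑ v ∈ Finset.univ.filter (fun v : V => InVStar R v), (pairing v).card ≤ 48 * k := by
  have hpairing (v : V) : (pairing v).card ≤ 2 * degN R v := by
    rcases le_or_gt 3 (degN R v) with hv | hv
    · simpa using card_le_two_mul_of_isNoncrossing (hbranch v hv) (hnc v (Or.inr (Or.inl hv)))
    · simpa using card_le_two_mul_of_card_le_three (pairing v) (by simpa using hv.le)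
  have hleaves : (univ.filter (degN R · = 1)).card = 2 * k := by
    rw [← hZ, ← hR.2, Set.ncard_eq_toFinset_card', Set.toFinset_ofPred]
  calc ∑ v ∈ univ.filter (InVStar R), (pairing v).card
      ≤ ∑ v ∈ univ.filter (InVStar R), 2 * degN R v := sum_le_sum fun v _ => hpairing v
    _ = 2 * ∑ v ∈ univ.filter (InVStar R), degN R v := (mul_sum ..).symm
    _ ≤ 2 * (3 * (4 * (univ.filter (degN R · = 1)).card)) := by
      grw [sum_degN_inVStar_le, sum_degN_leaves_branch_le R hR.1]
    _ = 48 * k := by rw [hleaves]; ring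

/-- A family of pairings at the vertices of `V*(R)` of a Steiner tree for a set of `2k`
vertices: at each `v ∈ V*(R)` the edges of `R` incident to `v` are enumerated as
`e¹, …, e^{r_v}` (via `enum`), `pairing v` is a set of unordered pairs of indices of
incident edges (with pairs of distinct edges at vertices of degree `≥ 3`) that is
non-crossing.  Then the total number of pairs is at most `48k`. -/
theorem stmt12 {V : Type*} [Fintype V] (H : SimpleGraph V) (Z : Set V)
    (k : ℕ) (hk : 1 ≤ k) (hZ : Z.ncard = 2 * k)
    (R : H.Subgraph) (hR : IsSteinerTree H Z R)
    [DecidablePred (InVStar R)]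
    (enum : ∀ v : V, Fin (degN R v) ≃ {e : Sym2 V // e ∈ R.edgeSet ∧ v ∈ e})
    (pairing : ∀ v : V, Finset (Sym2 (Fin (degN R v))))
    (hnc : ∀ v : V, InVStar R v → ¬ ∃ i j x y : Fin (degN R v),
      s(i, j) ∈ pairing v ∧ s(x, y) ∈ pairing v ∧ i < j ∧ x < y ∧
      ((i < x ∧ x < j ∧ j < y) ∨ (x < i ∧ i < y ∧ y < j)))
    (hbranch : ∀ v : V, 3 ≤ degN R v → ∀ p ∈ pairing v, ¬ p.IsDiag) :
    ∑ v ∈ Finset.univ.filter (fun v : V => InVStar R v), (pairing v).card ≤ 48 * k :=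
  stmt12_general H Z k hZ R hR pairing hnc hbranch
end

section
/- Let ℓ ≥ 1 be an odd integer and let σ be an involution of {1, …, ℓ} with exactly one fixed point z, such that: (a) there is no i ∈ {1, …, ℓ−1} with σ(i) = i + 1; and (b) there do not exist i, x with σ(i) ≠ i and σ(x) ≠ x such that min(i,σ(i)) < min(x,σ(x)) < max(i,σ(i)) < max(x,σ(x)). Then z = (ℓ+1)/2 and σ(i) = ℓ + 1 − i for every i ∈ {1, …, ℓ}. -/
/-- Let `ℓ ≥ 1` be odd and let `σ` be an involution of `{1, …, ℓ}` with exactly one fixed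
point `z`, such that (a) there is no `i ∈ {1, …, ℓ−1}` with `σ i = i + 1`, and (b) there are
no `i, x` with `σ i ≠ i`, `σ x ≠ x` and
`min i (σ i) < min x (σ x) < max i (σ i) < max x (σ x)`.  Then `z = (ℓ+1)/2` and
`σ i = ℓ + 1 − i` for all `i ∈ {1, …, ℓ}`. -/
theorem stmt16 (ℓ : ℕ) (hodd : Odd ℓ) (hℓ : 1 ≤ ℓ)
    (σ : ℕ → ℕ)
    (hmem : ∀ i, 1 ≤ i → i ≤ ℓ → 1 ≤ σ i ∧ σ i ≤ ℓ)
    (hinv : ∀ i, 1 ≤ i → i ≤ ℓ → σ (σ i) = i)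
    (z : ℕ) (hz1 : 1 ≤ z) (hz2 : z ≤ ℓ) (hzfix : σ z = z)
    (huniq : ∀ i, 1 ≤ i → i ≤ ℓ → σ i = i → i = z)
    (ha : ∀ i, 1 ≤ i → i + 1 ≤ ℓ → σ i ≠ i + 1)
    (hb : ¬ ∃ i x, 1 ≤ i ∧ i ≤ ℓ ∧ 1 ≤ x ∧ x ≤ ℓ ∧ σ i ≠ i ∧ σ x ≠ x ∧
      min i (σ i) < min x (σ x) ∧ min x (σ x) < max i (σ i) ∧
      max i (σ i) < max x (σ x)) :
    z = (ℓ + 1) / 2 ∧ ∀ i, 1 ≤ i → i ≤ ℓ → σ i = ℓ + 1 - i := by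
  -- Key lemma: every arc {a,b} of σ is symmetric about z, i.e. a + b = 2z.
  -- Proved by strong induction on the span b - a.
  have key' : ∀ s a b, 1 ≤ a → b ≤ ℓ → a < b → σ a = b → σ b = a → b - a ≤ s →
      a + b = 2 * z := by
    intro s
    induction s using Nat.strong_induction_on with
    | _ s IH =>
      intro a b ha1 hb2 hab hσa hσb hspan
      have ha2 : a ≤ ℓ := by omega
      have hb1 : 1 ≤ b := by omega
      -- the span is at least 2 (span 1 is forbidden by (a))
      have hspan2 : a + 2 ≤ b := by
        by_contra h
        have hb' : b = a + 1 := by omega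
        exact ha a ha1 (by omega) (by omega)
      -- any interior point c ≠ z has its arc strictly inside (a,b), and by IH
      -- that arc is symmetric about z.
      have inner : ∀ c, a < c → c < b → c ≠ z → c + σ c = 2 * z ∧ a < σ c ∧ σ c < b := by
        intro c hc1 hc2 hcz
        have hc1' : 1 ≤ c := by omega
        have hc2' : c ≤ ℓ := by omega
        have hcσ := hmem c hc1' hc2'
        have hcfix : σ c ≠ c := fun h => hcz (huniq c hc1' hc2' h)
        have hinvc := hinv c hc1' hc2'
        have hca : σ c ≠ a := by
          intro h
          rw [h] at hinvc
          omega
        have hcb : σ c ≠ b := by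
          intro h
          rw [h] at hinvc
          omega
        have hlt : a < σ c ∧ σ c < b := by
          constructor
          · by_contra h
            -- σ c < a : the arcs {σ c, c} and {a, b} cross
            exact hb ⟨c, a, hc1', hc2', ha1, ha2, hcfix, by omega, by omega, by omega,
              by omega⟩
          · by_contra h
            -- σ c > b : the arcs {a, b} and {c, σ c} cross
            exact hb ⟨a, c, ha1, ha2, hc1', hc2', by omega, hcfix, by omega, by omega,
              by omega⟩
        refine ⟨?_, hlt.1, hlt.2⟩
        rcases lt_or_gt_of_ne hcfix with h | h
        · have := IH (b - a - 2) (by omega) (σ c) c (by omega) hc2' h hinvc rfl (by omega)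
          omega
        · exact IH (b - a - 2) (by omega) c (σ c) hc1' (by omega) h rfl hinvc (by omega)
      -- symmetry from the two extreme interior points a+1 and b-1
      have h1 : 2 * z ≤ a + b := by
        by_cases hz' : a + 1 = z
        · omega
        · obtain ⟨he, h2, h3⟩ := inner (a + 1) (by omega) (by omega) hz'
          omega
      have h2 : a + b ≤ 2 * z := by
        by_cases hz' : b - 1 = z
        · omega
        · obtain ⟨he, h2, h3⟩ := inner (b - 1) (by omega) (by omega) hz'
          omega
      omega
  -- consequence: for any non-fixed i in range, i + σ i = 2z
  have key : ∀ i, 1 ≤ i → i ≤ ℓ → σ i ≠ i → i + σ i = 2 * z := by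
    intro i hi1 hi2 hne
    have hσ := hmem i hi1 hi2
    have hinvi := hinv i hi1 hi2
    rcases lt_or_gt_of_ne hne with h | h
    · have := key' ℓ (σ i) i hσ.1 hi2 h hinvi rfl (by omega)
      omega
    · exact key' ℓ i (σ i) hi1 hσ.2 h rfl hinvi (by omega)
  rcases eq_or_lt_of_le hℓ with h1 | h1
  · -- ℓ = 1
    have hℓ1 : ℓ = 1 := h1.symm
    subst hℓ1
    have hz : z = 1 := by omega
    refine ⟨by omega, ?_⟩
    intro i hi1 hi2
    have : i = 1 := by omega
    subst this
    have := hmem 1 le_rfl le_rfl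
    omega
  · -- ℓ ≥ 3 (ℓ is odd and ≥ 2)
    have hℓ3 : 3 ≤ ℓ := by
      rcases hodd with ⟨k, hk⟩
      omega
    -- z ≥ 2
    have hz2' : 2 ≤ z := by
      by_contra h
      have hz1' : z = 1 := by omega
      have h2 : σ 2 ≠ 2 := fun hf => by have := huniq 2 (by omega) (by omega) hf; omega
      have := key 2 (by omega) (by omega) h2
      have := hmem 2 (by omega) (by omega)
      omega
    -- z ≤ ℓ - 1
    have hzl : z + 1 ≤ ℓ := by
      by_contra h
      have hzℓ : z = ℓ := by omega
      have h2 : σ (ℓ - 1) ≠ ℓ - 1 := fun hf => by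
        have := huniq (ℓ - 1) (by omega) (by omega) hf; omega
      have := key (ℓ - 1) (by omega) (by omega) h2
      have := hmem (ℓ - 1) (by omega) (by omega)
      omega
    -- now 1 and ℓ are non-fixed, giving 2z = ℓ + 1
    have h1f : σ 1 ≠ 1 := fun hf => by have := huniq 1 (by omega) (by omega) hf; omega
    have hℓf : σ ℓ ≠ ℓ := fun hf => by have := huniq ℓ (by omega) (by omega) hf; omega
    have e1 := key 1 (by omega) (by omega) h1f
    have eℓ := key ℓ (by omega) (by omega) hℓf
    have hm1 := hmem 1 (by omega) (by omega)
    have hmℓ := hmem ℓ (by omega) (by omega)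
    have h2z : 2 * z = ℓ + 1 := by omega
    refine ⟨by omega, ?_⟩
    intro i hi1 hi2
    by_cases hfix : σ i = i
    · have := huniq i hi1 hi2 hfix
      omega
    · have := key i hi1 hi2 hfix
      omega
end
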